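/- arXiv:2605.25064 — 4 statements merged into one kernel-verified Lean document; each statement's English description precedes it below -/
import Mathlib

section
/- Define q(x,t) = 2e^{3x+9t} / (1 + 6e^{x+5t} + 3e^{2x+8t}) and r(x,t) = e^{−2x−4t}(1 + 2e^{x+3t} + 3e^{2x+8t}) / (1 + 4e^{x+5t} + e^{2x+8t}). Then q satisfies the PDE ∂_t q = ∂_x² q + 2 q (∂_x q) r for all real x, t. -/
/-! Both sides are explicit rational functions of exponentials. After differentiating with the
quotient rule, every exponential `exp (a * x + b * t)` that occurs has `(a, b)` an integer
combination of `(1, 3)` and `(0, 2)`, so with `u = exp (x + 3 * t)` and `w = exp (2 * t)` the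
PDE becomes an identity between rational functions of `u` and `w`. -/

open Real

noncomputable def q (x t : ℝ) : ℝ :=
  2 * exp (3 * x + 9 * t) / (1 + 6 * exp (x + 5 * t) + 3 * exp (2 * x + 8 * t))

noncomputable def r (x t : ℝ) : ℝ :=
  exp (-2 * x - 4 * t) * (1 + 2 * exp (x + 3 * t) + 3 * exp (2 * x + 8 * t))
    / (1 + 4 * exp (x + 5 * t) + exp (2 * x + 8 * t))

section QuotientRule

variable {𝕜 : Type*} [NontriviallyNormedField 𝕜]

theorem deriv_div_eq_of_hasDerivAt {f g f' g' : 𝕜 → 𝕜}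
    (hf : ∀ y, HasDerivAt f (f' y) y) (hg : ∀ y, HasDerivAt g (g' y) y) (hg₀ : ∀ y, g y ≠ 0) :
    deriv (fun y => f y / g y) = fun y => (f' y * g y - f y * g' y) / g y ^ 2 :=
  funext fun y => ((hf y).fun_div (hg y) (hg₀ y)).deriv

theorem iteratedDeriv_two_div_eq_of_hasDerivAt {f g f' g' : 𝕜 → 𝕜} {f'' g'' x : 𝕜}
    (hf : ∀ y, HasDerivAt f (f' y) y) (hg : ∀ y, HasDerivAt g (g' y) y) (hg₀ : ∀ y, g y ≠ 0)
    (hf' : HasDerivAt f' f'' x) (hg' : HasDerivAt g' g'' x) :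
    iteratedDeriv 2 (fun y => f y / g y) x
      = ((f'' * g x - f x * g'') * g x - 2 * (f' x * g x - f x * g' x) * g' x) / g x ^ 3 := by
  rw [iteratedDeriv_succ, iteratedDeriv_one, deriv_div_eq_of_hasDerivAt hf hg hg₀]
  have hnum : HasDerivAt (fun y => f' y * g y - f y * g' y) (f'' * g x - f x * g'') x :=
    ((hf'.mul (hg x)).sub ((hf x).mul hg')).congr_deriv (by ring)
  have hden : HasDerivAt (fun y => g y ^ 2) (2 * g x * g' x) x :=
    ((hg x).fun_pow 2).congr_deriv (by ring)
  rw [(hnum.fun_div hden (pow_ne_zero 2 (hg₀ x))).deriv]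
  field_simp [hg₀ x]

end QuotientRule

theorem hasDerivAt_exp_mul_add (a c y : ℝ) :
    HasDerivAt (fun y => exp (a * y + c)) (a * exp (a * y + c)) y := by
  simpa [mul_comm] using (((hasDerivAt_id y).const_mul a).add_const c).exp

theorem hasDerivAt_exp_add_mul (c a y : ℝ) :
    HasDerivAt (fun y => exp (c + a * y)) (a * exp (c + a * y)) y := by
  simpa [mul_comm] using (((hasDerivAt_id y).const_mul a).const_add c).exp

noncomputable def qNum (x t : ℝ) : ℝ := 2 * exp (3 * x + 9 * t)

noncomputable def qDen (x t : ℝ) : ℝ := 1 + 6 * exp (x + 5 * t) + 3 * exp (2 * x + 8 * t)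

theorem q_eq_qNum_div_qDen (x t : ℝ) : q x t = qNum x t / qDen x t := rfl

theorem qDen_pos (x t : ℝ) : 0 < qDen x t := by
  unfold qDen
  positivity

section PartialDerivatives

variable (x t : ℝ)

theorem hasDerivAt_qNum_fst : HasDerivAt (qNum · t) (3 * qNum x t) x :=
  ((hasDerivAt_exp_mul_add 3 (9 * t) x).const_mul 2).congr_deriv (by unfold qNum; ring)

theorem hasDerivAt_qNum_snd : HasDerivAt (qNum x ·) (9 * qNum x t) t :=
  ((hasDerivAt_exp_add_mul (3 * x) 9 t).const_mul 2).congr_deriv (by unfold qNum; ring)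

theorem hasDerivAt_qDen_fst :
    HasDerivAt (qDen · t) (6 * exp (x + 5 * t) + 6 * exp (2 * x + 8 * t)) x :=
  (((((hasDerivAt_exp _).comp_add_const x (5 * t)).const_mul 6).const_add 1).add
    ((hasDerivAt_exp_mul_add 2 (8 * t) x).const_mul 3)).congr_deriv (by ring)

theorem hasDerivAt_qDen_fst_fst :
    HasDerivAt (fun y => 6 * exp (y + 5 * t) + 6 * exp (2 * y + 8 * t))
      (6 * exp (x + 5 * t) + 12 * exp (2 * x + 8 * t)) x :=
  ((((hasDerivAt_exp _).comp_add_const x (5 * t)).const_mul 6).add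
    ((hasDerivAt_exp_mul_add 2 (8 * t) x).const_mul 6)).congr_deriv (by ring)

theorem hasDerivAt_qDen_snd :
    HasDerivAt (qDen x ·) (30 * exp (x + 5 * t) + 24 * exp (2 * x + 8 * t)) t :=
  ((((hasDerivAt_exp_add_mul x 5 t).const_mul 6).const_add 1).add
    ((hasDerivAt_exp_add_mul (2 * x) 8 t).const_mul 3)).congr_deriv (by ring)

theorem deriv_q_fst :
    deriv (fun y => q y t) x
      = (3 * qNum x t * qDen x t
          - qNum x t * (6 * exp (x + 5 * t) + 6 * exp (2 * x + 8 * t))) / qDen x t ^ 2 :=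
  ((hasDerivAt_qNum_fst x t).div (hasDerivAt_qDen_fst x t) (qDen_pos x t).ne').deriv

theorem deriv_q_snd :
    deriv (fun s => q x s) t
      = (9 * qNum x t * qDen x t
          - qNum x t * (30 * exp (x + 5 * t) + 24 * exp (2 * x + 8 * t))) / qDen x t ^ 2 :=
  ((hasDerivAt_qNum_snd x t).div (hasDerivAt_qDen_snd x t) (qDen_pos x t).ne').deriv

theorem iteratedDeriv_two_q_fst :
    iteratedDeriv 2 (fun y => q y t) x
      = ((9 * qNum x t * qDen x t
            - qNum x t * (6 * exp (x + 5 * t) + 12 * exp (2 * x + 8 * t))) * qDen x t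
          - 2 * (3 * qNum x t * qDen x t
            - qNum x t * (6 * exp (x + 5 * t) + 6 * exp (2 * x + 8 * t)))
            * (6 * exp (x + 5 * t) + 6 * exp (2 * x + 8 * t))) / qDen x t ^ 3 := by
  simp only [q_eq_qNum_div_qDen]
  rw [iteratedDeriv_two_div_eq_of_hasDerivAt (fun y => hasDerivAt_qNum_fst y t)
    (fun y => hasDerivAt_qDen_fst y t) (fun y => (qDen_pos y t).ne')
    ((hasDerivAt_qNum_fst x t).const_mul 3) (hasDerivAt_qDen_fst_fst x t)]
  ring

end PartialDerivatives

theorem stmt4 (x t : ℝ) :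
    deriv (fun s => q x s) t
      = iteratedDeriv 2 (fun y => q y t) x
        + 2 * q x t * deriv (fun y => q y t) x * r x t := by
  rw [deriv_q_snd, iteratedDeriv_two_q_fst, deriv_q_fst, q_eq_qNum_div_qDen, r]
  unfold qNum qDen
  have e₁ : exp (x + 5 * t) = exp (x + 3 * t) * exp (2 * t) := by rw [← exp_add]; ring_nf
  have e₂ : exp (2 * x + 8 * t) = exp (x + 3 * t) ^ 2 * exp (2 * t) := by
    rw [← exp_nat_mul, ← exp_add]; ring_nf
  have e₃ : exp (3 * x + 9 * t) = exp (x + 3 * t) ^ 3 := by rw [← exp_nat_mul]; ring_nf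
  have e₄ : exp (-2 * x - 4 * t) = exp (2 * t) / exp (x + 3 * t) ^ 2 := by
    rw [eq_div_iff (by positivity), ← exp_nat_mul, ← exp_add]; ring_nf
  rw [e₁, e₂, e₃, e₄]
  have hu : 0 < exp (x + 3 * t) := exp_pos _
  have hw : 0 < exp (2 * t) := exp_pos _
  generalize exp (x + 3 * t) = u at *
  generalize exp (2 * t) = w at *
  have hD₁ : 0 < 1 + 6 * (u * w) + 3 * (u ^ 2 * w) := by positivity
  have hD₂ : 0 < 1 + 4 * (u * w) + u ^ 2 * w := by positivity
  field_simp
  ring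
end

section
/- Define q(x,t) = 2e^{3x+9t} / (1 + 6e^{x+5t} + 3e^{2x+8t}) and r(x,t) = e^{−2x−4t}(1 + 2e^{x+3t} + 3e^{2x+8t}) / (1 + 4e^{x+5t} + e^{2x+8t}). Then r satisfies the PDE ∂_t r = −∂_x² r + 2 q r (∂_x r) for all real x, t. -/
/-!
Write `r = N / D` with `N`, `D` exponential polynomials in `x` and `t`. The quotient rule expresses
`r_t`, `r_x` and `r_xx` through the derivatives of `N` and `D`; substituting `u = e^x`, `w = e^t`
turns the PDE into an identity between rational functions of `u` and `w`, which clears to a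
polynomial identity.
-/

open Real

theorem iteratedDeriv_two_div {𝕜 : Type*} [NontriviallyNormedField 𝕜]
    {N N' D D' : 𝕜 → 𝕜} {N'' D'' x : 𝕜}
    (hN : ∀ y, HasDerivAt N (N' y) y) (hN' : HasDerivAt N' N'' x)
    (hD : ∀ y, HasDerivAt D (D' y) y) (hD' : HasDerivAt D' D'' x) (hD0 : ∀ y, D y ≠ 0) :
    iteratedDeriv 2 (fun y => N y / D y) x
      = ((N'' * D x - N x * D'') * D x - 2 * (N' x * D x - N x * D' x) * D' x) / D x ^ 3 := by
  have hderiv : deriv (fun y => N y / D y) = fun y => (N' y * D y - N y * D' y) / D y ^ 2 :=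
    funext fun y => ((hN y).fun_div (hD y) (hD0 y)).deriv
  rw [iteratedDeriv_succ, iteratedDeriv_one, hderiv]
  refine (((hN'.fun_mul (hD x)).fun_sub ((hN x).fun_mul hD')).fun_div ((hD x).fun_pow 2)
    (pow_ne_zero 2 (hD0 x))).deriv.trans ?_
  field_simp [hD0 x]
  ring

theorem Real.exp_ofNat_mul (n : ℕ) [n.AtLeastTwo] (x : ℝ) :
    exp (ofNat(n) * x) = exp x ^ (ofNat(n) : ℕ) := by
  rw [← exp_nat_mul, Nat.cast_ofNat]

section

variable (x t : ℝ)

noncomputable def rNum : ℝ :=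
  exp (-2 * x - 4 * t) * (1 + 2 * exp (x + 3 * t) + 3 * exp (2 * x + 8 * t))

noncomputable def rDen : ℝ :=
  1 + 4 * exp (x + 5 * t) + exp (2 * x + 8 * t)

lemma rDen_pos : 0 < rDen x t := by
  unfold rDen; positivity

lemma hasDerivAt_rNum_x :
    HasDerivAt (rNum · t) (-2 * exp (-2 * x - 4 * t) * (1 + exp (x + 3 * t))) x :=
  ((((hasDerivAt_id' x).const_mul (-2)).sub_const (4 * t)).exp.fun_mul
    (((((hasDerivAt_id' x).add_const (3 * t)).exp.const_mul 2).const_add 1).fun_add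
      ((((hasDerivAt_id' x).const_mul 2).add_const (8 * t)).exp.const_mul 3))).congr_deriv (by ring)

lemma hasDerivAt_rNum_x_x :
    HasDerivAt (fun y => -2 * exp (-2 * y - 4 * t) * (1 + exp (y + 3 * t)))
      (exp (-2 * x - 4 * t) * (4 + 2 * exp (x + 3 * t))) x :=
  (((((hasDerivAt_id' x).const_mul (-2)).sub_const (4 * t)).exp.const_mul (-2)).fun_mul
    (((hasDerivAt_id' x).add_const (3 * t)).exp.const_add 1)).congr_deriv (by ring)

lemma hasDerivAt_rDen_x :
    HasDerivAt (rDen · t) (4 * exp (x + 5 * t) + 2 * exp (2 * x + 8 * t)) x :=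
  (((((hasDerivAt_id' x).add_const (5 * t)).exp.const_mul 4).const_add 1).fun_add
    (((hasDerivAt_id' x).const_mul 2).add_const (8 * t)).exp).congr_deriv (by ring)

lemma hasDerivAt_rDen_x_x :
    HasDerivAt (fun y => 4 * exp (y + 5 * t) + 2 * exp (2 * y + 8 * t))
      (4 * exp (x + 5 * t) + 4 * exp (2 * x + 8 * t)) x :=
  ((((hasDerivAt_id' x).add_const (5 * t)).exp.const_mul 4).fun_add
    ((((hasDerivAt_id' x).const_mul 2).add_const (8 * t)).exp.const_mul 2)).congr_deriv (by ring)

lemma hasDerivAt_rNum_t :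
    HasDerivAt (rNum x ·)
      (exp (-2 * x - 4 * t) * (-4 - 2 * exp (x + 3 * t) + 12 * exp (2 * x + 8 * t))) t :=
  ((((hasDerivAt_id' t).const_mul 4).const_sub (-2 * x)).exp.fun_mul
    ((((((hasDerivAt_id' t).const_mul 3).const_add x).exp.const_mul 2).const_add 1).fun_add
      ((((hasDerivAt_id' t).const_mul 8).const_add (2 * x)).exp.const_mul 3))).congr_deriv (by ring)

lemma hasDerivAt_rDen_t :
    HasDerivAt (rDen x ·) (20 * exp (x + 5 * t) + 8 * exp (2 * x + 8 * t)) t :=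
  ((((((hasDerivAt_id' t).const_mul 5).const_add x).exp.const_mul 4).const_add 1).fun_add
    (((hasDerivAt_id' t).const_mul 8).const_add (2 * x)).exp).congr_deriv (by ring)

end

theorem stmt5 (x t : ℝ) :
    deriv (fun s => r x s) t
      = -iteratedDeriv 2 (fun y => r y t) x
        + 2 * q x t * r x t * deriv (fun y => r y t) x := by
  have hD0 : ∀ y, rDen y t ≠ 0 := fun y => (rDen_pos y t).ne'
  -- `r = rNum / rDen` holds definitionally, so the quotient rule applies to `r` as it stands.
  have r_t : deriv (fun s => r x s) t = _ :=
    ((hasDerivAt_rNum_t x t).fun_div (hasDerivAt_rDen_t x t) (hD0 x)).deriv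
  have r_x : deriv (fun y => r y t) x = _ :=
    ((hasDerivAt_rNum_x x t).fun_div (hasDerivAt_rDen_x x t) (hD0 x)).deriv
  have r_xx : iteratedDeriv 2 (fun y => r y t) x = _ :=
    iteratedDeriv_two_div (fun y => hasDerivAt_rNum_x y t) (hasDerivAt_rNum_x_x x t)
      (fun y => hasDerivAt_rDen_x y t) (hasDerivAt_rDen_x_x x t) hD0
  rw [r_t, r_x, r_xx]
  simp only [q, r, rNum, rDen, exp_add, exp_sub, neg_mul, exp_neg, Real.exp_ofNat_mul]
  field_simp
  ring
end

section
/- Let f₁, f₂ be smooth nonvanishing real functions of one variable x such that (1/f₁)′ and (1/f₂)′ are nonvanishing, and define the first-order differential operators T_D(f)(h) := ((1/f)′)^{-1} · (h/f)′. Set f₁^{[1]} := T_D(f₂)(f₁) and f₂^{[1]} := T_D(f₁)(f₂), and assume f₁^{[1]}, f₂^{[1]} and (1/f₁^{[1]})′, (1/f₂^{[1]})′ are nonvanishing. Then for every smooth function h, T_D(f₂^{[1]})(T_D(f₁)(h)) = T_D(f₁^{[1]})(T_D(f₂)(h)). -/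
/-- The differential-type mKP Darboux operator `T_D(f) : h ↦ ((1/f)')⁻¹ · (h/f)'`. -/
noncomputable def TD (f h : ℝ → ℝ) : ℝ → ℝ :=
  fun x => (deriv (fun y => (f y)⁻¹) x)⁻¹ * deriv (fun y => h y / f y) x

lemma TD_eq (f g : ℝ → ℝ) (hf : Differentiable ℝ f) (hg : Differentiable ℝ g)
    (x : ℝ) (hf0 : f x ≠ 0) (hf' : deriv f x ≠ 0) :
    TD f g x = (g x * deriv f x - deriv g x * f x) / deriv f x := by
  unfold TD
  rw [deriv_fun_inv'' (hf x) hf0, deriv_fun_div (hg x) (hf x) hf0]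
  field_simp
  ring

lemma deriv_ne_of_inv (f : ℝ → ℝ) (hf : Differentiable ℝ f) (x : ℝ)
    (hf0 : f x ≠ 0) (h : deriv (fun y => (f y)⁻¹) x ≠ 0) : deriv f x ≠ 0 := by
  rw [deriv_fun_inv'' (hf x) hf0] at h
  intro h0
  apply h
  rw [h0]
  simp

lemma TD_funext (f g : ℝ → ℝ) (hf : Differentiable ℝ f) (hg : Differentiable ℝ g)
    (hf0 : ∀ x, f x ≠ 0) (hfd : ∀ x, deriv f x ≠ 0) :
    TD f g = fun x => (g x * deriv f x - deriv g x * f x) / deriv f x :=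
  funext fun x => TD_eq f g hf hg x (hf0 x) (hfd x)

lemma TD_differentiable (f g : ℝ → ℝ) (hf : ContDiff ℝ (⊤ : ℕ∞) f) (hg : ContDiff ℝ (⊤ : ℕ∞) g)
    (hf0 : ∀ x, f x ≠ 0) (hfd : ∀ x, deriv f x ≠ 0) :
    Differentiable ℝ (TD f g) := by
  have hfi : ContDiff ℝ (⊤ : ℕ∞) f := hf.of_le (by simp)
  have hgi : ContDiff ℝ (⊤ : ℕ∞) g := hg.of_le (by simp)
  have hfD : Differentiable ℝ f := hf.differentiable (by simp)
  have hgD : Differentiable ℝ g := hg.differentiable (by simp)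
  have hf'D : Differentiable ℝ (deriv f) := ((contDiff_infty_iff_deriv.mp hfi).2).differentiable (by simp)
  have hg'D : Differentiable ℝ (deriv g) := ((contDiff_infty_iff_deriv.mp hgi).2).differentiable (by simp)
  rw [TD_funext f g hfD hgD hf0 hfd]
  exact ((hgD.mul hf'D).sub (hg'D.mul hfD)).div hf'D hfd

lemma deriv_TD (f g : ℝ → ℝ) (hf : ContDiff ℝ (⊤ : ℕ∞) f) (hg : ContDiff ℝ (⊤ : ℕ∞) g)
    (hf0 : ∀ x, f x ≠ 0) (hfd : ∀ x, deriv f x ≠ 0) (x : ℝ) :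
    deriv (TD f g) x =
      ((g x * deriv (deriv f) x - deriv (deriv g) x * f x) * deriv f x
        - (g x * deriv f x - deriv g x * f x) * deriv (deriv f) x) / (deriv f x) ^ 2 := by
  have hfi : ContDiff ℝ (⊤ : ℕ∞) f := hf.of_le (by simp)
  have hgi : ContDiff ℝ (⊤ : ℕ∞) g := hg.of_le (by simp)
  have hfD : Differentiable ℝ f := hf.differentiable (by simp)
  have hgD : Differentiable ℝ g := hg.differentiable (by simp)
  have hf'C : ContDiff ℝ (⊤ : ℕ∞) (deriv f) := (contDiff_infty_iff_deriv.mp hfi).2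
  have hg'C : ContDiff ℝ (⊤ : ℕ∞) (deriv g) := (contDiff_infty_iff_deriv.mp hgi).2
  have hf'D : Differentiable ℝ (deriv f) := hf'C.differentiable (by simp)
  have hg'D : Differentiable ℝ (deriv g) := hg'C.differentiable (by simp)
  have hf''D : Differentiable ℝ (deriv (deriv f)) :=
    ((contDiff_infty_iff_deriv.mp hf'C).2).differentiable (by simp)
  rw [TD_funext f g hfD hgD hf0 hfd]
  rw [deriv_fun_div (c := fun x => g x * deriv f x - deriv g x * f x) (((hgD x).mul (hf'D x)).sub ((hg'D x).mul (hfD x))) (hf'D x) (hfd x)]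
  rw [deriv_fun_sub (f := fun y => g y * deriv f y) (g := fun y => deriv g y * f y) ((hgD x).mul (hf'D x)) ((hg'D x).mul (hfD x)),
    deriv_fun_mul (hgD x) (hf'D x), deriv_fun_mul (hg'D x) (hfD x)]
  have hne := hfd x
  field_simp
  ring

theorem stmt8 (f₁ f₂ : ℝ → ℝ)
    (hf₁ : ContDiff ℝ (⊤ : ℕ∞) f₁) (hf₂ : ContDiff ℝ (⊤ : ℕ∞) f₂)
    (hf₁0 : ∀ x, f₁ x ≠ 0) (hf₂0 : ∀ x, f₂ x ≠ 0)
    (hf₁d : ∀ x, deriv (fun y => (f₁ y)⁻¹) x ≠ 0)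
    (hf₂d : ∀ x, deriv (fun y => (f₂ y)⁻¹) x ≠ 0)
    (h₁'0 : ∀ x, TD f₂ f₁ x ≠ 0) (h₂'0 : ∀ x, TD f₁ f₂ x ≠ 0)
    (h₁'d : ∀ x, deriv (fun y => (TD f₂ f₁ y)⁻¹) x ≠ 0)
    (h₂'d : ∀ x, deriv (fun y => (TD f₁ f₂ y)⁻¹) x ≠ 0)
    (h : ℝ → ℝ) (hh : ContDiff ℝ (⊤ : ℕ∞) h) :
    ∀ x, TD (TD f₁ f₂) (TD f₁ h) x = TD (TD f₂ f₁) (TD f₂ h) x := by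
  intro x
  have hf₁D : Differentiable ℝ f₁ := hf₁.differentiable (by simp)
  have hf₂D : Differentiable ℝ f₂ := hf₂.differentiable (by simp)
  have hhD : Differentiable ℝ h := hh.differentiable (by simp)
  have ha1 : ∀ y, deriv f₁ y ≠ 0 := fun y => deriv_ne_of_inv f₁ hf₁D y (hf₁0 y) (hf₁d y)
  have hb1 : ∀ y, deriv f₂ y ≠ 0 := fun y => deriv_ne_of_inv f₂ hf₂D y (hf₂0 y) (hf₂d y)
  -- the four transformed functions
  have huD : Differentiable ℝ (TD f₁ f₂) := TD_differentiable f₁ f₂ hf₁ hf₂ hf₁0 ha1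
  have hvD : Differentiable ℝ (TD f₂ f₁) := TD_differentiable f₂ f₁ hf₂ hf₁ hf₂0 hb1
  have hwD : Differentiable ℝ (TD f₁ h) := TD_differentiable f₁ h hf₁ hh hf₁0 ha1
  have hzD : Differentiable ℝ (TD f₂ h) := TD_differentiable f₂ h hf₂ hh hf₂0 hb1
  have hu' : deriv (TD f₁ f₂) x ≠ 0 :=
    deriv_ne_of_inv (TD f₁ f₂) huD x (h₂'0 x) (h₂'d x)
  have hv' : deriv (TD f₂ f₁) x ≠ 0 :=
    deriv_ne_of_inv (TD f₂ f₁) hvD x (h₁'0 x) (h₁'d x)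
  rw [TD_eq (TD f₁ f₂) (TD f₁ h) huD hwD x (h₂'0 x) hu',
      TD_eq (TD f₂ f₁) (TD f₂ h) hvD hzD x (h₁'0 x) hv']
  have hNU : deriv (TD f₁ f₂) x ≠ 0 := hu'
  have hNV : deriv (TD f₂ f₁) x ≠ 0 := hv'
  rw [deriv_TD f₁ f₂ hf₁ hf₂ hf₁0 ha1 x] at hNU ⊢
  rw [deriv_TD f₂ f₁ hf₂ hf₁ hf₂0 hb1 x] at hNV ⊢
  rw [deriv_TD f₁ h hf₁ hh hf₁0 ha1 x, deriv_TD f₂ h hf₂ hh hf₂0 hb1 x]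
  rw [TD_eq f₁ f₂ hf₁D hf₂D x (hf₁0 x) (ha1 x), TD_eq f₂ f₁ hf₂D hf₁D x (hf₂0 x) (hb1 x),
      TD_eq f₁ h hf₁D hhD x (hf₁0 x) (ha1 x), TD_eq f₂ h hf₂D hhD x (hf₂0 x) (hb1 x)]
  have hNU' : (f₂ x * deriv (deriv f₁) x - deriv (deriv f₂) x * f₁ x) * deriv f₁ x
      - (f₂ x * deriv f₁ x - deriv f₂ x * f₁ x) * deriv (deriv f₁) x ≠ 0 := by
    intro hz; apply hNU; rw [hz]; simp
  have hNV' : (f₁ x * deriv (deriv f₂) x - deriv (deriv f₁) x * f₂ x) * deriv f₂ x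
      - (f₁ x * deriv f₂ x - deriv f₁ x * f₂ x) * deriv (deriv f₂) x ≠ 0 := by
    intro hz; apply hNV; rw [hz]; simp
  have ha1x := ha1 x
  have hb1x := hb1 x
  field_simp
  rw [div_eq_div_iff (by intro hz; apply hNU'; linear_combination hz)
    (by intro hz; apply hNV'; linear_combination hz)]
  ring
end

section
/- Let f₁, f₂ be smooth nonvanishing real functions of x with (1/f₁)′, (1/f₂)′ nonvanishing. Define f₂^{[1]} := ((f₂/f₁)′)/((1/f₁)′) and T_D(f₂)(f₁) := ((1/f₂)′)^{-1} (f₁/f₂)′. Then, at every point where T_D(f₂)(f₁) and f₂^{[1]} are nonzero, d/dx [ (T_D(f₂)(f₁))^{-1} ] = −(f₂/f₁) · d/dx [ (f₂^{[1]})^{-1} ]. -/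
theorem stmt9 (f₁ f₂ : ℝ → ℝ)
    (hf₁ : ContDiff ℝ (⊤ : ℕ∞) f₁) (hf₂ : ContDiff ℝ (⊤ : ℕ∞) f₂)
    (hf₁0 : ∀ x, f₁ x ≠ 0) (hf₂0 : ∀ x, f₂ x ≠ 0)
    (hf₁d : ∀ x, deriv (fun y => (f₁ y)⁻¹) x ≠ 0)
    (hf₂d : ∀ x, deriv (fun y => (f₂ y)⁻¹) x ≠ 0)
    (x : ℝ)
    (hTD : TD f₂ f₁ x ≠ 0)
    (hf21 : deriv (fun y => f₂ y / f₁ y) x / deriv (fun y => (f₁ y)⁻¹) x ≠ 0) :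
    deriv (fun y => (TD f₂ f₁ y)⁻¹) x
      = -(f₂ x / f₁ x)
          * deriv (fun y =>
              (deriv (fun z => f₂ z / f₁ z) y / deriv (fun z => (f₁ z)⁻¹) y)⁻¹) x := by
  have hd1 : Differentiable ℝ f₁ := hf₁.differentiable (by simp)
  have hd2 : Differentiable ℝ f₂ := hf₂.differentiable (by simp)
  set P : ℝ → ℝ := fun y => deriv (fun z => f₂ z / f₁ z) y with hPdef
  set Q : ℝ → ℝ := fun y => deriv (fun z => (f₁ z)⁻¹) y with hQdef
  -- smoothness of P and Q
  have hg : ContDiff ℝ (⊤ : ℕ∞) fun z => f₂ z / f₁ z := hf₂.div hf₁ hf₁0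
  have hq : ContDiff ℝ (⊤ : ℕ∞) fun z => (f₁ z)⁻¹ := hf₁.inv hf₁0
  have hPsm : ContDiff ℝ ((⊤ : ℕ∞) : WithTop ℕ∞) P := (contDiff_infty_iff_deriv.1 (hg.of_le (by simp))).2
  have hQsm : ContDiff ℝ ((⊤ : ℕ∞) : WithTop ℕ∞) Q := (contDiff_infty_iff_deriv.1 (hq.of_le (by simp))).2
  have hPx : P x ≠ 0 := by
    intro h
    exact hf21 (by rw [show deriv (fun y => f₂ y / f₁ y) x = P x from rfl, h, zero_div])
  -- eventually P ≠ 0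
  have hev : ∀ᶠ y in nhds x, P y ≠ 0 :=
    (hPsm.continuous.continuousAt).eventually_ne hPx
  -- pointwise formulas
  have hPval : ∀ y, P y = (deriv f₂ y * f₁ y - f₂ y * deriv f₁ y) / f₁ y ^ 2 := by
    intro y; exact deriv_div (hd2 y) (hd1 y) (hf₁0 y)
  have hQval : ∀ y, Q y = -deriv f₁ y / f₁ y ^ 2 := by
    intro y; exact deriv_inv'' (hd1 y) (hf₁0 y)
  have hUval : ∀ y, deriv (fun z => (f₂ z)⁻¹) y = -deriv f₂ y / f₂ y ^ 2 := by
    intro y; exact deriv_inv'' (hd2 y) (hf₂0 y)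
  have hVval : ∀ y, deriv (fun z => f₁ z / f₂ z) y
      = (deriv f₁ y * f₂ y - f₁ y * deriv f₂ y) / f₂ y ^ 2 := by
    intro y; exact deriv_div (hd1 y) (hd2 y) (hf₂0 y)
  -- eventual equality of the LHS integrand with a nicer expression
  have heq : (fun y => (TD f₂ f₁ y)⁻¹)
      =ᶠ[nhds x] fun y => (f₁ y)⁻¹ - (f₂ y / f₁ y) * (Q y / P y) := by
    filter_upwards [hev] with y hPy
    have hnum : deriv f₂ y * f₁ y - f₂ y * deriv f₁ y ≠ 0 := by
      intro h
      apply hPy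
      rw [hPval y, h, zero_div]
    have hA := hf₁0 y; have hB := hf₂0 y
    have hV : deriv f₁ y * f₂ y - f₁ y * deriv f₂ y ≠ 0 := by
      intro h; apply hnum; linarith [h]
    simp only [TD, hUval y, hVval y, hPval y, hQval y]
    rw [mul_inv, inv_inv]
    have hW : -(deriv f₂ y * f₁ y) + f₂ y * deriv f₁ y ≠ 0 := by
      intro h; apply hnum; linarith [h]
    field_simp
    ring_nf
    field_simp
    ring
  rw [heq.deriv_eq]
  -- differentiate the nicer expression
  have dA : DifferentiableAt ℝ (fun y => (f₁ y)⁻¹) x := (hq.differentiable (by simp)) x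
  have dg : DifferentiableAt ℝ (fun y => f₂ y / f₁ y) x := (hg.differentiable (by simp)) x
  have dQ : DifferentiableAt ℝ Q x := (hQsm.differentiable (by norm_num)) x
  have dP : DifferentiableAt ℝ P x := (hPsm.differentiable (by norm_num)) x
  have dPhi : DifferentiableAt ℝ (fun y => Q y / P y) x := dQ.div dP hPx
  have dgPhi : DifferentiableAt ℝ (fun y => (f₂ y / f₁ y) * (Q y / P y)) x := dg.mul dPhi
  rw [deriv_fun_sub dA dgPhi, deriv_fun_mul dg dPhi]
  have hdg : deriv (fun y => f₂ y / f₁ y) x = P x := rfl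
  have hdA : deriv (fun y => (f₁ y)⁻¹) x = Q x := rfl
  have hRHS : (fun y => (P y / Q y)⁻¹) = fun y => Q y / P y := by
    funext y; rw [inv_div]
  rw [hdg, hdA, hRHS]
  field_simp
  ring
end
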